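/- arXiv:2009.14197 — 3 statements merged into one kernel-verified Lean document; each statement's English description precedes it below -/
import Mathlib

section
/- Let Y be a positive definite n×n matrix and p ∈ [1,2). Then the function ω ↦ Tr(Y ω^{1−2/p}) on the set of positive definite density matrices (positive definite matrices of trace 1) is strictly convex. -/
open Matrix ComplexOrder

/-- Real power of a (Hermitian, in practice positive definite) matrix via spectral calculus. -/
noncomputable def mpow {m : Type*} [Fintype m] [DecidableEq m]
    (A : Matrix m m ℂ) (r : ℝ) : Matrix m m ℂ :=
  if h : A.IsHermitian then
    (h.eigenvectorUnitary : Matrix m m ℂ) *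
      Matrix.diagonal (fun i => ((h.eigenvalues i ^ r : ℝ) : ℂ)) *
      star (h.eigenvectorUnitary : Matrix m m ℂ)
  else A

/-!
For `q ∈ (-1, 0)` the scalar identity `x ^ q = C⁻¹ ∫₀^∞ t ^ q (x + t)⁻¹ dt` lifts through the
spectral decomposition to `Tr (Y ω ^ q) = C⁻¹ ∫₀^∞ t ^ q Tr (Y (ω + t)⁻¹) dt`, so everything
reduces to strict convexity of `ω ↦ Tr (Y ω⁻¹)`, which is also the case `q = -1`.
Writing `Y = B Bᴴ`, `Tr (Y ω⁻¹)` is the sum of `⟪b, ω⁻¹ b⟫` over the columns `b` of `B`.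
Completing the square, `⟪v, ω⁻¹ v⟫ = max_x (2 Re ⟪x, v⟫ - ⟪x, ω x⟫)` is a maximum of affine
functions of `ω`; for the mixture `∑ᵢ wᵢ ωᵢ` with maximiser `x`, the convexity gap is
`∑ᵢ wᵢ ⟪x - ωᵢ⁻¹ v, ωᵢ (x - ωᵢ⁻¹ v)⟫`, which is positive as soon as `ω₀⁻¹ v ≠ ω₁⁻¹ v`.
Since `B` is invertible, `ω₀ ≠ ω₁` gives such a column.
-/

open MeasureTheory Set

namespace Matrix

variable {m 𝕜 : Type*} [RCLike 𝕜]

open RCLike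

lemma PosDef.smul_add_smul {M₀ M₁ : Matrix m m 𝕜} (h₀ : M₀.PosDef) (h₁ : M₁.PosDef) {a b : ℝ}
    (ha : 0 < a) (hb : 0 < b) : (a • M₀ + b • M₁).PosDef :=
  (h₀.smul ha).add (h₁.smul hb)

lemma convex_setOf_posDef : Convex ℝ {M : Matrix m m 𝕜 | M.PosDef} :=
  convex_iff_forall_pos.mpr fun _ h₀ _ h₁ _ _ ha hb _ => h₀.smul_add_smul h₁ ha hb

variable [Fintype m]

lemma re_dotProduct_smul_add_smul_mulVec (M₀ M₁ : Matrix m m 𝕜) (a b : ℝ) (x : m → 𝕜) :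
    re (star x ⬝ᵥ (a • M₀ + b • M₁) *ᵥ x) =
      a * re (star x ⬝ᵥ M₀ *ᵥ x) + b * re (star x ⬝ᵥ M₁ *ᵥ x) := by
  simp only [add_mulVec, smul_mulVec, dotProduct_add, dotProduct_smul, map_add, smul_re]

lemma trace_mul_conjTranspose_mul (B N : Matrix m m 𝕜) :
    (B * Bᴴ * N).trace = ∑ k, star (Bᵀ k) ⬝ᵥ N *ᵥ Bᵀ k := by
  rw [Matrix.mul_assoc, trace_mul_comm, trace]
  exact Finset.sum_congr rfl fun k _ => mul_mul_apply _ _ _ k k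

variable [DecidableEq m]

lemma PosDef.isUnit_det {M : Matrix m m 𝕜} (hM : M.PosDef) : IsUnit M.det :=
  (isUnit_iff_isUnit_det M).mp hM.isUnit

lemma mulVec_inv_mulVec {M : Matrix m m 𝕜} (hM : IsUnit M.det) (v : m → 𝕜) :
    M *ᵥ M⁻¹ *ᵥ v = v := by
  rw [mulVec_mulVec, mul_nonsing_inv M hM, one_mulVec]

lemma PosDef.exists_isUnit_eq_mul_conjTranspose {Y : Matrix m m 𝕜} (hY : Y.PosDef) :
    ∃ B : Matrix m m 𝕜, IsUnit B ∧ Y = B * Bᴴ := by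
  open scoped MatrixOrder in
  obtain ⟨B, hB, rfl⟩ :=
    CStarAlgebra.isStrictlyPositive_iff_eq_star_mul_self.mp hY.isStrictlyPositive
  exact ⟨Bᴴ, hB.star, by rw [conjTranspose_conjTranspose]; rfl⟩

lemma IsHermitian.re_dotProduct_mulVec_sub_inv_mulVec {M : Matrix m m 𝕜} (hM : M.IsHermitian)
    (hdet : IsUnit M.det) (v x : m → 𝕜) :
    re (star (x - M⁻¹ *ᵥ v) ⬝ᵥ M *ᵥ (x - M⁻¹ *ᵥ v)) =
      re (star x ⬝ᵥ M *ᵥ x) - 2 * re (star x ⬝ᵥ v) + re (star v ⬝ᵥ M⁻¹ *ᵥ v) := by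
  set u := M⁻¹ *ᵥ v
  have hMu : M *ᵥ u = v := mulVec_inv_mulVec hdet v
  have hux : star u ⬝ᵥ M *ᵥ x = star (star x ⬝ᵥ v) := by
    rw [dotProduct_mulVec, ← hM.eq, ← star_mulVec, hMu, star_dotProduct]
  have huv : star u ⬝ᵥ v = star (star v ⬝ᵥ u) := star_dotProduct _ _
  rw [star_sub, mulVec_sub, sub_dotProduct, dotProduct_sub, dotProduct_sub, hux, hMu, huv]
  simp only [map_sub, RCLike.star_def, conj_re]
  ring

lemma PosDef.re_dotProduct_inv_mulVec_smul_add_smul_gap {M₀ M₁ : Matrix m m 𝕜}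
    (h₀ : M₀.PosDef) (h₁ : M₁.PosDef) {a b : ℝ} (ha : 0 < a) (hb : 0 < b) (hab : a + b = 1)
    {v x : m → 𝕜} (hx : (a • M₀ + b • M₁) *ᵥ x = v) :
    a * re (star v ⬝ᵥ M₀⁻¹ *ᵥ v) + b * re (star v ⬝ᵥ M₁⁻¹ *ᵥ v) -
        re (star v ⬝ᵥ (a • M₀ + b • M₁)⁻¹ *ᵥ v) =
      a * re (star (x - M₀⁻¹ *ᵥ v) ⬝ᵥ M₀ *ᵥ (x - M₀⁻¹ *ᵥ v)) +
        b * re (star (x - M₁⁻¹ *ᵥ v) ⬝ᵥ M₁ *ᵥ (x - M₁⁻¹ *ᵥ v)) := by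
  have hinv : (a • M₀ + b • M₁)⁻¹ *ᵥ v = x := by
    rw [← hx, mulVec_mulVec, nonsing_inv_mul _ (h₀.smul_add_smul h₁ ha hb).isUnit_det,
      one_mulVec]
  have hxv : re (star x ⬝ᵥ v) = a * re (star x ⬝ᵥ M₀ *ᵥ x) + b * re (star x ⬝ᵥ M₁ *ᵥ x) := by
    rw [← hx, re_dotProduct_smul_add_smul_mulVec]
  have hvx : re (star v ⬝ᵥ x) = re (star x ⬝ᵥ v) := by
    rw [star_dotProduct, RCLike.star_def, conj_re]
  rw [h₀.isHermitian.re_dotProduct_mulVec_sub_inv_mulVec h₀.isUnit_det,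
    h₁.isHermitian.re_dotProduct_mulVec_sub_inv_mulVec h₁.isUnit_det, hinv, hvx]
  linear_combination hxv + 2 * re (star x ⬝ᵥ v) * hab

lemma PosDef.re_dotProduct_inv_mulVec_smul_add_smul_le {M₀ M₁ : Matrix m m 𝕜} (h₀ : M₀.PosDef)
    (h₁ : M₁.PosDef) {a b : ℝ} (ha : 0 < a) (hb : 0 < b) (hab : a + b = 1) (v : m → 𝕜) :
    re (star v ⬝ᵥ (a • M₀ + b • M₁)⁻¹ *ᵥ v) ≤
      a * re (star v ⬝ᵥ M₀⁻¹ *ᵥ v) + b * re (star v ⬝ᵥ M₁⁻¹ *ᵥ v) := by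
  set x := (a • M₀ + b • M₁)⁻¹ *ᵥ v
  have hgap := h₀.re_dotProduct_inv_mulVec_smul_add_smul_gap h₁ ha hb hab
    (mulVec_inv_mulVec (h₀.smul_add_smul h₁ ha hb).isUnit_det v)
  have q₀ := h₀.posSemidef.re_dotProduct_nonneg (x - M₀⁻¹ *ᵥ v)
  have q₁ := h₁.posSemidef.re_dotProduct_nonneg (x - M₁⁻¹ *ᵥ v)
  nlinarith

lemma PosDef.re_dotProduct_inv_mulVec_smul_add_smul_lt {M₀ M₁ : Matrix m m 𝕜} (h₀ : M₀.PosDef)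
    (h₁ : M₁.PosDef) {a b : ℝ} (ha : 0 < a) (hb : 0 < b) (hab : a + b = 1) {v : m → 𝕜}
    (hv : M₀⁻¹ *ᵥ v ≠ M₁⁻¹ *ᵥ v) :
    re (star v ⬝ᵥ (a • M₀ + b • M₁)⁻¹ *ᵥ v) <
      a * re (star v ⬝ᵥ M₀⁻¹ *ᵥ v) + b * re (star v ⬝ᵥ M₁⁻¹ *ᵥ v) := by
  set x := (a • M₀ + b • M₁)⁻¹ *ᵥ v
  have hgap := h₀.re_dotProduct_inv_mulVec_smul_add_smul_gap h₁ ha hb hab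
    (mulVec_inv_mulVec (h₀.smul_add_smul h₁ ha hb).isUnit_det v)
  have q₀ := h₀.posSemidef.re_dotProduct_nonneg (x - M₀⁻¹ *ᵥ v)
  have q₁ := h₁.posSemidef.re_dotProduct_nonneg (x - M₁⁻¹ *ᵥ v)
  rcases eq_or_ne x (M₀⁻¹ *ᵥ v) with hx | hx
  · have := h₁.re_dotProduct_pos (sub_ne_zero.mpr (hx ▸ hv : x ≠ M₁⁻¹ *ᵥ v))
    nlinarith
  · have := h₀.re_dotProduct_pos (sub_ne_zero.mpr hx)
    nlinarith

lemma PosDef.strictConvexOn_re_trace_mul_inv {Y : Matrix m m 𝕜} (hY : Y.PosDef) :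
    StrictConvexOn ℝ {M : Matrix m m 𝕜 | M.PosDef} fun M => re (Y * M⁻¹).trace := by
  refine ⟨convex_setOf_posDef, fun M₀ h₀ M₁ h₁ hne a b ha hb hab => ?_⟩
  obtain ⟨B, hB, rfl⟩ := hY.exists_isUnit_eq_mul_conjTranspose
  obtain ⟨k, hk⟩ : ∃ k, M₀⁻¹ *ᵥ Bᵀ k ≠ M₁⁻¹ *ᵥ Bᵀ k := by
    by_contra! h
    refine hne (inv_inj (hB.mul_left_injective ?_) h₀.isUnit_det)
    ext i k
    exact congrFun (h k) i
  simp only [smul_eq_mul, trace_mul_conjTranspose_mul, map_sum, Finset.mul_sum,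
    ← Finset.sum_add_distrib]
  exact Finset.sum_lt_sum (fun k _ => h₀.re_dotProduct_inv_mulVec_smul_add_smul_le h₁ ha hb hab _)
    ⟨k, Finset.mem_univ k, h₀.re_dotProduct_inv_mulVec_smul_add_smul_lt h₁ ha hb hab hk⟩

lemma PosDef.strictConvexOn_re_trace_mul_inv_add_smul_one {Y : Matrix m m 𝕜} (hY : Y.PosDef)
    {t : ℝ} (ht : 0 ≤ t) :
    StrictConvexOn ℝ {A : Matrix m m 𝕜 | A.PosDef}
      fun A => re (Y * (A + t • (1 : Matrix m m 𝕜))⁻¹).trace :=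
  (hY.strictConvexOn_re_trace_mul_inv.translate_left (t • 1)).subset
    (fun _ hA => PosDef.posSemidef_add (PosSemidef.one.smul ht) hA) convex_setOf_posDef

lemma IsHermitian.re_trace_mul_cfc {A : Matrix m m 𝕜} (hA : A.IsHermitian) (Y : Matrix m m 𝕜)
    (f : ℝ → ℝ) :
    re (Y * cfc f A).trace = ∑ k, f (hA.eigenvalues k) *
      re ((star (hA.eigenvectorUnitary : Matrix m m 𝕜) * Y * hA.eigenvectorUnitary) k k) := by
  rw [hA.cfc_eq, IsHermitian.cfc, Unitary.conjStarAlgAut_apply, ← Matrix.mul_assoc,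
    trace_mul_cycle, ← Matrix.mul_assoc, trace, map_sum]
  refine Finset.sum_congr rfl fun k _ => ?_
  rw [diag_apply, mul_diagonal, Function.comp_apply, Function.comp_apply, re_mul_ofReal, mul_comm]

lemma PosDef.inv_add_smul_one_eq_cfc {A : Matrix m m 𝕜} (hA : A.PosDef) {t : ℝ} (ht : 0 ≤ t) :
    (A + t • (1 : Matrix m m 𝕜))⁻¹ = cfc (fun x => (x + t)⁻¹) A := by
  open scoped MatrixOrder in
  have hspec : ∀ x ∈ spectrum ℝ A, x + t ≠ 0 := fun x hx =>
    (add_pos_of_pos_of_nonneg (hA.isStrictlyPositive.spectrum_pos hx) ht).ne'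
  rw [cfc_inv (fun x => x + t) A hspec, cfc_add_const t (fun x => x) A, cfc_id' ℝ A,
    Algebra.algebraMap_eq_smul_one, nonsing_inv_eq_ringInverse]

end Matrix

lemma MeasureTheory.setIntegral_lt_setIntegral_of_forall_lt {X : Type*} [MeasurableSpace X]
    {μ : Measure X} {s : Set X} {f g : X → ℝ} (hs : MeasurableSet s) (hμs : μ s ≠ 0)
    (hf : IntegrableOn f s μ) (hg : IntegrableOn g s μ) (hfg : ∀ x ∈ s, f x < g x) :
    ∫ x in s, f x ∂μ < ∫ x in s, g x ∂μ := by
  have hpos : ∀ x ∈ s, 0 < (g - f) x := fun x hx => sub_pos.2 (hfg x hx)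
  rw [← sub_pos, ← integral_sub hg hf]
  refine (setIntegral_pos_iff_support_of_nonneg_ae ?_ (hg.sub hf)).2 ?_
  · filter_upwards [ae_restrict_mem hs] with x hx using (hpos x hx).le
  · rwa [inter_eq_right.2 fun x hx => Function.mem_support.2 (hpos x hx).ne', pos_iff_ne_zero]

namespace Real

variable {q x : ℝ}

lemma rpow_mul_inv_add_eqOn_rpowIntegrand₀₁ (hq : q ∈ Ioo (-1) 0) (hx : 0 < x) :
    EqOn (fun t => t ^ q * (x + t)⁻¹) (fun t => rpowIntegrand₀₁ (q + 1) t x * x⁻¹) (Ioi 0) := by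
  intro t ht
  have hp : q + 1 ∈ Ioo 0 1 := ⟨by linarith [hq.1], by linarith [hq.2]⟩
  dsimp only
  rw [rpowIntegrand₀₁_eq_pow_div hp (le_of_lt ht) hx.le, add_sub_cancel_right, add_comm t]
  field_simp

lemma integrableOn_rpow_mul_inv_add (hq : q ∈ Ioo (-1) 0) (hx : 0 < x) :
    IntegrableOn (fun t => t ^ q * (x + t)⁻¹) (Ioi 0) := by
  have hp : q + 1 ∈ Ioo 0 1 := ⟨by linarith [hq.1], by linarith [hq.2]⟩
  refine IntegrableOn.congr_fun ?_ (rpow_mul_inv_add_eqOn_rpowIntegrand₀₁ hq hx).symm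
    measurableSet_Ioi
  exact (integrableOn_rpowIntegrand₀₁_Ioi hp hx.le).mul_const x⁻¹

lemma integral_rpow_mul_inv_add (hq : q ∈ Ioo (-1) 0) (hx : 0 < x) :
    ∫ t in Ioi 0, t ^ q * (x + t)⁻¹ = (∫ t in Ioi 0, rpowIntegrand₀₁ (q + 1) t 1) * x ^ q := by
  have hp : q + 1 ∈ Ioo 0 1 := ⟨by linarith [hq.1], by linarith [hq.2]⟩
  rw [setIntegral_congr_fun measurableSet_Ioi (rpow_mul_inv_add_eqOn_rpowIntegrand₀₁ hq hx),
    integral_mul_const, integral_rpowIntegrand₀₁_eq_rpow_mul_const hp hx.le, rpow_add_one hx.ne']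
  field_simp

end Real

section MatrixPower

variable {m : Type*} [Fintype m] [DecidableEq m]

lemma mpow_eq_cfc {A : Matrix m m ℂ} (hA : A.IsHermitian) (r : ℝ) :
    mpow A r = cfc (· ^ r : ℝ → ℝ) A := by
  rw [mpow, dif_pos hA, hA.cfc_eq, IsHermitian.cfc, Unitary.conjStarAlgAut_apply]
  rfl

namespace Matrix.PosDef

variable {A : Matrix m m ℂ} {q : ℝ}

lemma mpow_neg_one (hA : A.PosDef) : mpow A (-1) = A⁻¹ := by
  have hinv := hA.inv_add_smul_one_eq_cfc le_rfl
  rw [zero_smul, add_zero] at hinv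
  rw [mpow_eq_cfc hA.isHermitian, hinv]
  exact cfc_congr fun x _ => by rw [Real.rpow_neg_one, add_zero]

lemma rpow_mul_re_trace_mul_inv_add_smul_one_eqOn (hA : A.PosDef) (Y : Matrix m m ℂ) (q : ℝ) :
    EqOn (fun t : ℝ => t ^ q * (Y * (A + t • (1 : Matrix m m ℂ))⁻¹).trace.re)
      (fun t => ∑ k, ((star (hA.isHermitian.eigenvectorUnitary : Matrix m m ℂ) * Y *
        hA.isHermitian.eigenvectorUnitary) k k).re * (t ^ q * (hA.isHermitian.eigenvalues k + t)⁻¹))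
      (Ioi 0) := by
  intro t ht
  have htrace := hA.isHermitian.re_trace_mul_cfc Y (fun x => (x + t)⁻¹)
  simp only [RCLike.re_to_complex] at htrace
  simp only [hA.inv_add_smul_one_eq_cfc (le_of_lt ht), htrace, Finset.mul_sum]
  exact Finset.sum_congr rfl fun k _ => by ring

lemma integrableOn_rpow_mul_re_trace_mul_inv_add_smul_one (hA : A.PosDef) (hq : q ∈ Ioo (-1) 0)
    (Y : Matrix m m ℂ) :
    IntegrableOn (fun t : ℝ => t ^ q * (Y * (A + t • (1 : Matrix m m ℂ))⁻¹).trace.re) (Ioi 0) :=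
  IntegrableOn.congr_fun (integrable_finsetSum _ fun k _ =>
      (Real.integrableOn_rpow_mul_inv_add hq (hA.eigenvalues_pos k)).const_mul _)
    (hA.rpow_mul_re_trace_mul_inv_add_smul_one_eqOn Y q).symm measurableSet_Ioi

lemma integral_rpow_mul_re_trace_mul_inv_add_smul_one (hA : A.PosDef) (hq : q ∈ Ioo (-1) 0)
    (Y : Matrix m m ℂ) :
    ∫ t in Ioi 0, t ^ q * (Y * (A + t • (1 : Matrix m m ℂ))⁻¹).trace.re =
      (∫ t in Ioi 0, Real.rpowIntegrand₀₁ (q + 1) t 1) * (Y * mpow A q).trace.re := by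
  have htrace := hA.isHermitian.re_trace_mul_cfc Y (· ^ q : ℝ → ℝ)
  simp only [RCLike.re_to_complex] at htrace
  rw [setIntegral_congr_fun measurableSet_Ioi (hA.rpow_mul_re_trace_mul_inv_add_smul_one_eqOn Y q),
    integral_finsetSum _ fun k _ => (Real.integrableOn_rpow_mul_inv_add hq
      (hA.eigenvalues_pos k)).const_mul _, mpow_eq_cfc hA.isHermitian, htrace, Finset.mul_sum]
  refine Finset.sum_congr rfl fun k _ => ?_
  rw [integral_const_mul, Real.integral_rpow_mul_inv_add hq (hA.eigenvalues_pos k)]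
  ring

lemma strictConvexOn_re_trace_mul_mpow_of_mem_Ioo {Y : Matrix m m ℂ} (hY : Y.PosDef)
    (hq : q ∈ Ioo (-1) 0) :
    StrictConvexOn ℝ {A : Matrix m m ℂ | A.PosDef} fun A => (Y * mpow A q).trace.re := by
  refine ⟨convex_setOf_posDef, fun A₀ h₀ A₁ h₁ hne a b ha hb hab => ?_⟩
  set C := ∫ t in Ioi 0, Real.rpowIntegrand₀₁ (q + 1) t 1
  have hC : 0 < C :=
    Real.integral_rpowIntegrand₀₁_one_pos ⟨by linarith [hq.1], by linarith [hq.2]⟩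
  set g := fun (A : Matrix m m ℂ) (t : ℝ) => t ^ q * (Y * (A + t • (1 : Matrix m m ℂ))⁻¹).trace.re
  have hg : ∀ t ∈ Ioi (0 : ℝ), g (a • A₀ + b • A₁) t < a * g A₀ t + b * g A₁ t := fun t ht => by
    have hlt := (hY.strictConvexOn_re_trace_mul_inv_add_smul_one ht.le).2 h₀ h₁ hne ha hb hab
    simp only [RCLike.re_to_complex, smul_eq_mul] at hlt
    have htq : 0 < t ^ q := Real.rpow_pos_of_pos ht q
    simp only [g]
    nlinarith
  have hint₀ := h₀.integrableOn_rpow_mul_re_trace_mul_inv_add_smul_one hq Y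
  have hint₁ := h₁.integrableOn_rpow_mul_re_trace_mul_inv_add_smul_one hq Y
  refine lt_of_mul_lt_mul_left ?_ hC.le
  calc C * (Y * mpow (a • A₀ + b • A₁) q).trace.re = ∫ t in Ioi 0, g (a • A₀ + b • A₁) t :=
        ((h₀.smul_add_smul h₁ ha hb).integral_rpow_mul_re_trace_mul_inv_add_smul_one hq Y).symm
    _ < ∫ t in Ioi 0, a * g A₀ t + b * g A₁ t :=
        setIntegral_lt_setIntegral_of_forall_lt measurableSet_Ioi (by simp)
          ((h₀.smul_add_smul h₁ ha hb).integrableOn_rpow_mul_re_trace_mul_inv_add_smul_one hq Y)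
          ((hint₀.const_mul a).add (hint₁.const_mul b)) hg
    _ = C * (a • (Y * mpow A₀ q).trace.re + b • (Y * mpow A₁ q).trace.re) := by
        rw [integral_add (hint₀.const_mul a) (hint₁.const_mul b), integral_const_mul,
          integral_const_mul, h₀.integral_rpow_mul_re_trace_mul_inv_add_smul_one hq Y,
          h₁.integral_rpow_mul_re_trace_mul_inv_add_smul_one hq Y, smul_eq_mul, smul_eq_mul]
        ring

lemma strictConvexOn_re_trace_mul_mpow {Y : Matrix m m ℂ} (hY : Y.PosDef) (hq : q ∈ Ico (-1) 0) :
    StrictConvexOn ℝ {A : Matrix m m ℂ | A.PosDef} fun A => (Y * mpow A q).trace.re := by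
  rcases hq.1.eq_or_lt with rfl | hq'
  · refine hY.strictConvexOn_re_trace_mul_inv.congr fun A hA => ?_
    simp only [RCLike.re_to_complex, hA.mpow_neg_one]
  · exact hY.strictConvexOn_re_trace_mul_mpow_of_mem_Ioo ⟨hq', hq.2⟩

end Matrix.PosDef

end MatrixPower

theorem trace_pow_strictConvex_general {n : ℕ} (Y : Matrix (Fin n) (Fin n) ℂ) (hY : Y.PosDef)
    (p : ℝ) (hp1 : 1 ≤ p) (hp2 : p < 2)
    (ω₀ ω₁ : Matrix (Fin n) (Fin n) ℂ) (h₀ : ω₀.PosDef) (h₁ : ω₁.PosDef)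
    (hne : ω₀ ≠ ω₁)
    (t : ℝ) (ht : t ∈ Set.Ioo (0:ℝ) 1) :
    ((Y * mpow ((1 - t) • ω₀ + t • ω₁) (1 - 2/p)).trace).re <
      (1 - t) * ((Y * mpow ω₀ (1 - 2/p)).trace).re +
        t * ((Y * mpow ω₁ (1 - 2/p)).trace).re := by
  have hp0 : 0 < p := by linarith
  have hq : 1 - 2 / p ∈ Ico (-1 : ℝ) 0 := by
    constructor
    · have : 2 / p ≤ 2 := (div_le_iff₀ hp0).2 (by linarith)
      linarith
    · have : 1 < 2 / p := (lt_div_iff₀ hp0).2 (by linarith)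
      linarith
  simpa only [smul_eq_mul] using
    (hY.strictConvexOn_re_trace_mul_mpow hq).2 h₀ h₁ hne (sub_pos.2 ht.2) ht.1 (sub_add_cancel 1 t)

/-- For positive definite `Y` and `p ∈ [1,2)`, the map `ω ↦ Tr(Y ω^{1-2/p})` is strictly
convex on positive definite density matrices. -/
theorem trace_pow_strictConvex {n : ℕ} (Y : Matrix (Fin n) (Fin n) ℂ) (hY : Y.PosDef)
    (p : ℝ) (hp1 : 1 ≤ p) (hp2 : p < 2)
    (ω₀ ω₁ : Matrix (Fin n) (Fin n) ℂ) (h₀ : ω₀.PosDef) (h₁ : ω₁.PosDef)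
    (ht₀ : ω₀.trace = 1) (ht₁ : ω₁.trace = 1) (hne : ω₀ ≠ ω₁)
    (t : ℝ) (ht : t ∈ Set.Ioo (0:ℝ) 1) :
    ((Y * mpow ((1 - t) • ω₀ + t • ω₁) (1 - 2/p)).trace).re <
      (1 - t) * ((Y * mpow ω₀ (1 - 2/p)).trace).re +
        t * ((Y * mpow ω₁ (1 - 2/p)).trace).re :=
  trace_pow_strictConvex_general Y hY p hp1 hp2 ω₀ ω₁ h₀ h₁ hne t ht
end

section
/- For α ∈ (−1,0) and x > 0, x^α = −(sin(πα)/π) ∫₀^∞ t^α/(t+x) dt. -/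
/-!
Scaling `t ↦ x t` reduces the claim to `x = 1`. The substitution `t = s / (1 - s)` turns
`∫₀^∞ t^(a-1) (1+t)^(-(a+b)) dt` into the Beta integral `B(a, b)`, and for `b = 1 - a` Euler's
reflection formula gives `B(a, 1 - a) = Γ(a) Γ(1 - a) = π / sin (π a)`; take `a = α + 1`.
-/

open MeasureTheory Set Real ProbabilityTheory

lemma ofReal_integral_Ioo_rpow_mul_one_sub_rpow (a b : ℝ) :
    ((∫ s in Ioo (0 : ℝ) 1, s ^ (a - 1) * (1 - s) ^ (b - 1) : ℝ) : ℂ)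
      = Complex.betaIntegral a b := by
  rw [← integral_Ioc_eq_integral_Ioo, ← intervalIntegral.integral_of_le zero_le_one,
    Complex.betaIntegral, ← intervalIntegral.integral_ofReal]
  refine intervalIntegral.integral_congr fun s hs => ?_
  rw [uIcc_of_le zero_le_one] at hs
  simp [Complex.ofReal_cpow hs.1, Complex.ofReal_cpow (sub_nonneg.2 hs.2)]

lemma integral_Ioo_rpow_mul_one_sub_rpow {a b : ℝ} (ha : 0 < a) (hb : 0 < b) :
    ∫ s in Ioo (0 : ℝ) 1, s ^ (a - 1) * (1 - s) ^ (b - 1) = beta a b := by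
  rw [beta_eq_betaIntegralReal a b ha hb,
    ← ofReal_integral_Ioo_rpow_mul_one_sub_rpow, Complex.ofReal_re]

lemma ProbabilityTheory.beta_one_sub (a : ℝ) : beta a (1 - a) = π / sin (π * a) := by
  rw [beta, add_sub_cancel, Gamma_one, div_one, Gamma_mul_Gamma_one_sub]

lemma image_div_one_sub_Ioo : (fun s : ℝ => s / (1 - s)) '' Ioo 0 1 = Ioi 0 := by
  ext t
  constructor
  · rintro ⟨s, ⟨hs0, hs1⟩, rfl⟩
    exact div_pos hs0 (sub_pos.2 hs1)
  · intro (ht : 0 < t)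
    refine ⟨t / (1 + t), ⟨by positivity, (div_lt_one (by positivity)).2 (by linarith)⟩, ?_⟩
    field_simp
    ring

lemma injOn_div_one_sub : InjOn (fun s : ℝ => s / (1 - s)) (Iio 1) := by
  intro a (ha : a < 1) b (hb : b < 1) hab
  have := sub_ne_zero.2 ha.ne'
  have := sub_ne_zero.2 hb.ne'
  field_simp at hab
  linarith

lemma hasDerivAt_div_one_sub {s : ℝ} (hs : s ≠ 1) :
    HasDerivAt (fun s : ℝ => s / (1 - s)) ((1 - s) ^ (-2 : ℝ)) s := by
  have hne : 1 - s ≠ 0 := sub_ne_zero.2 hs.symm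
  refine ((hasDerivAt_id' s).div ((hasDerivAt_id' s).const_sub 1) hne).congr_deriv ?_
  rw [rpow_neg_ofNat, zpow_neg, zpow_ofNat]
  field_simp
  ring

lemma integral_Ioi_rpow_mul_one_add_rpow (a b : ℝ) :
    ∫ t in Ioi (0 : ℝ), t ^ (a - 1) * (1 + t) ^ (-(a + b))
      = ∫ s in Ioo (0 : ℝ) 1, s ^ (a - 1) * (1 - s) ^ (b - 1) := by
  rw [← image_div_one_sub_Ioo, integral_image_eq_integral_abs_deriv_smul measurableSet_Ioo
    (fun s hs => (hasDerivAt_div_one_sub hs.2.ne).hasDerivWithinAt)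
    (injOn_div_one_sub.mono fun s hs => hs.2)]
  refine setIntegral_congr_fun measurableSet_Ioo fun s ⟨hs0, hs1⟩ => ?_
  have h1s : 0 < 1 - s := sub_pos.2 hs1
  have hpow : (1 - s) ^ (b - 1)
      = (1 - s) ^ (-2 : ℝ) * (1 - s) ^ (-(a - 1)) * (1 - s) ^ (-(-(a + b))) := by
    rw [← rpow_add h1s, ← rpow_add h1s]
    ring_nf
  rw [abs_of_pos (rpow_pos_of_pos h1s _), smul_eq_mul,
    show 1 + s / (1 - s) = (1 - s)⁻¹ by field_simp; ring, div_rpow hs0.le h1s.le,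
    inv_rpow h1s.le, ← rpow_neg h1s.le, div_eq_mul_inv, ← rpow_neg h1s.le, hpow]
  ring

lemma integral_Ioi_rpow_div_add_one {a : ℝ} (ha : 0 < a) (ha1 : a < 1) :
    ∫ t in Ioi (0 : ℝ), t ^ (a - 1) / (t + 1) = π / sin (π * a) :=
  calc ∫ t in Ioi (0 : ℝ), t ^ (a - 1) / (t + 1)
      = ∫ t in Ioi (0 : ℝ), t ^ (a - 1) * (1 + t) ^ (-(a + (1 - a))) := by
        refine setIntegral_congr_fun measurableSet_Ioi fun t _ => ?_
        rw [add_sub_cancel, rpow_neg_one, add_comm, div_eq_mul_inv]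
    _ = beta a (1 - a) := by
        rw [integral_Ioi_rpow_mul_one_add_rpow,
          integral_Ioo_rpow_mul_one_sub_rpow ha (sub_pos.2 ha1)]
    _ = π / sin (π * a) := beta_one_sub a

lemma integral_Ioi_rpow_div_add (α : ℝ) {x : ℝ} (hx : 0 < x) :
    ∫ t in Ioi (0 : ℝ), t ^ α / (t + x)
      = x ^ α * ∫ t in Ioi (0 : ℝ), t ^ α / (t + 1) := by
  have hscale := integral_comp_mul_left_Ioi (fun t => t ^ α / (t + x)) 0 hx
  rw [mul_zero, smul_eq_mul] at hscale
  calc ∫ t in Ioi (0 : ℝ), t ^ α / (t + x)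
      = x * ∫ t in Ioi (0 : ℝ), (x * t) ^ α / (x * t + x) := by
        rw [hscale, mul_inv_cancel_left₀ hx.ne']
    _ = x * ∫ t in Ioi (0 : ℝ), x ^ α / x * (t ^ α / (t + 1)) := by
        congr 1
        refine setIntegral_congr_fun measurableSet_Ioi fun t (ht : 0 < t) => ?_
        rw [mul_rpow hx.le ht.le]
        field_simp
    _ = x ^ α * ∫ t in Ioi (0 : ℝ), t ^ α / (t + 1) := by
        rw [integral_const_mul, ← mul_assoc, mul_div_cancel₀ _ hx.ne']

/-- For `α ∈ (−1,0)` and `x > 0`,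
`x^α = −(sin(πα)/π) ∫₀^∞ t^α/(t+x) dt`. -/
theorem rpow_integral_rep_neg (α x : ℝ) (hα : α ∈ Set.Ioo (-1:ℝ) 0) (hx : 0 < x) :
    x ^ α = -(Real.sin (Real.pi * α) / Real.pi) *
      ∫ t in Set.Ioi (0:ℝ), t ^ α / (t + x) := by
  obtain ⟨hα1, hα0⟩ := hα
  have hsin : sin (π * α) ≠ 0 :=
    (sin_neg_of_neg_of_neg_pi_lt (by nlinarith [pi_pos]) (by nlinarith [pi_pos])).ne
  have hbeta := integral_Ioi_rpow_div_add_one (a := α + 1) (by linarith) (by linarith)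
  rw [add_sub_cancel_right, mul_add_one, sin_add_pi] at hbeta
  rw [integral_Ioi_rpow_div_add α hx, hbeta]
  field_simp [pi_ne_zero]
end

section
/- Let ρ_{AB}, σ_{AB} be positive definite density matrices with marginals ρ_A, σ_A, and let α ∈ (−1,0) ∪ (0,1). Suppose that for β = α−1 the identity σ_A^β (ρ_A σ_A^{−α})^{β/(α−1)} ⊗ 1_B = σ_{AB}^β (ρ_{AB} σ_{AB}^{−α})^{β/(α−1)} holds. Then ρ_{AB} = σ_{AB}^{1−α} σ_A^{α−1} ρ_A σ_A^{−α} σ_{AB}^{α} ⊗-extended appropriately, i.e. ρ_{AB} = σ_{AB}^{1−α}(σ_A^{α−1} ρ_A σ_A^{−α} ⊗ 1_B) σ_{AB}^{α}. -/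
open Matrix ComplexOrder

/-- Partial trace over the second tensor factor. -/
noncomputable def ptraceB {a b : Type*} [Fintype b] (M : Matrix (a × b) (a × b) ℂ) :
    Matrix a a ℂ :=
  Matrix.of fun i j => ∑ k, M (i, k) (j, k)

/-- Real power of `ρ σ^{-α}`, defined via its similarity
`ρσ^{-α} = σ^{α/2} (σ^{-α/2} ρ σ^{-α/2}) σ^{-α/2}` to the positive definite matrix
`σ^{-α/2} ρ σ^{-α/2}`:  `(ρσ^{-α})^μ := σ^{α/2} (σ^{-α/2} ρ σ^{-α/2})^μ σ^{-α/2}`. -/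
noncomputable def spow {m : Type*} [Fintype m] [DecidableEq m]
    (ρ σ : Matrix m m ℂ) (α μ : ℝ) : Matrix m m ℂ :=
  mpow σ (α/2) * mpow (mpow σ (-(α/2)) * ρ * mpow σ (-(α/2))) μ * mpow σ (-(α/2))

/-!
For `β = α - 1` the exponent `β / (α - 1)` is `1`, and `(ρ σ^{-α})^1 = ρ σ^{-α}` because the
similarity defining the power cancels (`σ^{α/2} σ^{-α/2} = 1`, `σ^{-α/2} σ^{-α/2} = σ^{-α}`).
The hypothesis then reads `σ_A^{α-1} ρ_A σ_A^{-α} ⊗ 1_B = σ_{AB}^{α-1} ρ_{AB} σ_{AB}^{-α}`, and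
multiplying by `σ_{AB}^{1-α}` on the left and `σ_{AB}^{α}` on the right recovers `ρ_{AB}`.
-/

section mpow

variable {m : Type*} [Fintype m] [DecidableEq m] {A : Matrix m m ℂ}

lemma mpow_of_isHermitian (hA : A.IsHermitian) (r : ℝ) :
    mpow A r = (hA.eigenvectorUnitary : Matrix m m ℂ) *
      diagonal (fun i => ((hA.eigenvalues i ^ r : ℝ) : ℂ)) *
      star (hA.eigenvectorUnitary : Matrix m m ℂ) :=
  dif_pos hA

lemma isHermitian_mpow (hA : A.IsHermitian) (r : ℝ) : (mpow A r).IsHermitian := by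
  rw [mpow_of_isHermitian hA, star_eq_conjTranspose]
  refine isHermitian_mul_mul_conjTranspose _ (isHermitian_diagonal_of_self_adjoint _ ?_)
  ext i
  exact Complex.conj_ofReal _

lemma mpow_zero (hA : A.IsHermitian) : mpow A 0 = 1 := by
  simp [mpow_of_isHermitian hA]

lemma mpow_one (hA : A.IsHermitian) : mpow A 1 = A := by
  rw [mpow_of_isHermitian hA]
  simp only [Real.rpow_one]
  exact hA.spectral_theorem.symm

lemma mpow_add (hA : A.PosDef) (r s : ℝ) : mpow A (r + s) = mpow A r * mpow A s := by
  have hdiag : (diagonal fun i => ((hA.1.eigenvalues i ^ (r + s) : ℝ) : ℂ)) =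
      (diagonal fun i => ((hA.1.eigenvalues i ^ r : ℝ) : ℂ)) *
        diagonal fun i => ((hA.1.eigenvalues i ^ s : ℝ) : ℂ) := by
    rw [diagonal_mul_diagonal]
    congr 1
    ext i
    rw [Real.rpow_add (hA.eigenvalues_pos i), Complex.ofReal_mul]
  simp only [mpow_of_isHermitian hA.1, hdiag, mul_assoc,
    ← mul_assoc (star (hA.1.eigenvectorUnitary : Matrix m m ℂ)),
    UnitaryGroup.star_mul_self, one_mul]

lemma mpow_mul_mpow_neg (hA : A.PosDef) (r : ℝ) : mpow A r * mpow A (-r) = 1 := by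
  rw [← mpow_add hA, add_neg_cancel, mpow_zero hA.1]

lemma mpow_neg_mul_mpow (hA : A.PosDef) (r : ℝ) : mpow A (-r) * mpow A r = 1 := by
  rw [← mpow_add hA, neg_add_cancel, mpow_zero hA.1]

end mpow

lemma spow_one {m : Type*} [Fintype m] [DecidableEq m] {ρ σ : Matrix m m ℂ}
    (hρ : ρ.IsHermitian) (hσ : σ.PosDef) (α : ℝ) : spow ρ σ α 1 = ρ * mpow σ (-α) := by
  have hmid : (mpow σ (-(α / 2)) * ρ * mpow σ (-(α / 2))).IsHermitian := by
    simpa only [(isHermitian_mpow hσ.1 _).eq] using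
      isHermitian_mul_mul_conjTranspose (mpow σ (-(α / 2))) hρ
  calc spow ρ σ α 1
      = mpow σ (α / 2) * mpow σ (-(α / 2)) * ρ * (mpow σ (-(α / 2)) * mpow σ (-(α / 2))) := by
        rw [spow, mpow_one hmid]
        simp only [mul_assoc]
    _ = ρ * mpow σ (-α) := by
        rw [mpow_mul_mpow_neg hσ, ← mpow_add hσ, one_mul, ← neg_add, add_halves]

lemma ptraceB_eq_sum_submatrix {a b : Type*} [Fintype b] (M : Matrix (a × b) (a × b) ℂ) :
    ptraceB M = ∑ k, M.submatrix (·, k) (·, k) := by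
  ext i j
  simp [ptraceB, Matrix.sum_apply]

lemma Matrix.PosDef.ptraceB {a b : Type*} [Fintype a] [Fintype b] [Nonempty b]
    {M : Matrix (a × b) (a × b) ℂ} (hM : M.PosDef) : (ptraceB M).PosDef := by
  rw [ptraceB_eq_sum_submatrix]
  exact posDef_sum Finset.univ_nonempty fun k _ =>
    hM.submatrix fun i j hij => (Prod.ext_iff.mp hij).1

lemma eq_mpow_mul_mul_mpow_of_mpow_mul_mul_mpow_eq {m : Type*} [Fintype m] [DecidableEq m]
    {ρ σ X : Matrix m m ℂ} (hσ : σ.PosDef) {α : ℝ}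
    (h : X = mpow σ (α - 1) * ρ * mpow σ (-α)) :
    ρ = mpow σ (1 - α) * X * mpow σ α := by
  rw [h, ← neg_sub]
  simp only [mul_assoc, mpow_neg_mul_mpow hσ, mul_one]
  simp only [← mul_assoc, mpow_neg_mul_mpow hσ, one_mul]

open Kronecker in
theorem recovery_from_beta_eq_alpha_sub_one_general {nA nB : ℕ}
    (ρAB σAB : Matrix (Fin nA × Fin nB) (Fin nA × Fin nB) ℂ)
    (hρ : ρAB.PosDef) (hσ : σAB.PosDef)
    (α : ℝ) (hα : α ∈ Set.Ioo (-1:ℝ) 1)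
    (h : (mpow (ptraceB σAB) (α - 1) *
        spow (ptraceB ρAB) (ptraceB σAB) α ((α - 1)/(α - 1))) ⊗ₖ
          (1 : Matrix (Fin nB) (Fin nB) ℂ) =
      mpow σAB (α - 1) * spow ρAB σAB α ((α - 1)/(α - 1))) :
    ρAB = mpow σAB (1 - α) *
      ((mpow (ptraceB σAB) (α - 1) * ptraceB ρAB * mpow (ptraceB σAB) (-α)) ⊗ₖ
        (1 : Matrix (Fin nB) (Fin nB) ℂ)) * mpow σAB α := by
  cases isEmpty_or_nonempty (Fin nB)
  · exact Subsingleton.elim _ _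
  rw [div_self (sub_ne_zero.mpr hα.2.ne), spow_one hρ.ptraceB.1 hσ.ptraceB,
    spow_one hρ.1 hσ] at h
  simp only [← mul_assoc] at h
  exact eq_mpow_mul_mul_mpow_of_mpow_mul_mul_mpow_eq hσ h

open Kronecker in
/-- The `β = α − 1` instance of the equality condition
`σ_A^β (ρ_A σ_A^{−α})^{β/(α−1)} ⊗ 1_B = σ_{AB}^β (ρ_{AB} σ_{AB}^{−α})^{β/(α−1)}`
implies the recovery formula
`ρ_{AB} = σ_{AB}^{1−α}(σ_A^{α−1} ρ_A σ_A^{−α} ⊗ 1_B) σ_{AB}^{α}`. -/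
theorem recovery_from_beta_eq_alpha_sub_one {nA nB : ℕ}
    (ρAB σAB : Matrix (Fin nA × Fin nB) (Fin nA × Fin nB) ℂ)
    (hρ : ρAB.PosDef) (hσ : σAB.PosDef) (hρ1 : ρAB.trace = 1) (hσ1 : σAB.trace = 1)
    (α : ℝ) (hα : α ∈ Set.Ioo (-1:ℝ) 1) (hα0 : α ≠ 0)
    (h : (mpow (ptraceB σAB) (α - 1) *
        spow (ptraceB ρAB) (ptraceB σAB) α ((α - 1)/(α - 1))) ⊗ₖ
          (1 : Matrix (Fin nB) (Fin nB) ℂ) =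
      mpow σAB (α - 1) * spow ρAB σAB α ((α - 1)/(α - 1))) :
    ρAB = mpow σAB (1 - α) *
      ((mpow (ptraceB σAB) (α - 1) * ptraceB ρAB * mpow (ptraceB σAB) (-α)) ⊗ₖ
        (1 : Matrix (Fin nB) (Fin nB) ℂ)) * mpow σAB α :=
  recovery_from_beta_eq_alpha_sub_one_general ρAB σAB hρ hσ α hα h
end
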